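/- arXiv:1509.03761 — 3 statements merged into one kernel-verified Lean document; each statement's English description precedes it below -/
import Mathlib

section
/- Let (X,ρ) be a quasi-metric space, equipped with the topology induced by ρ (a set Ω ⊆ X is open iff for every x ∈ Ω there is ε > 0 with B(x,ε) ⊆ Ω), and let D = ⋃_{k∈ℤ} D_k be a system of dyadic cubes with parameters δ ∈ (0,1), 0 < c₁ ≤ C₁ < ∞ whose cubes are Borel sets. Then the σ-algebra generated by the collection of all dyadic cubes ⋃_{k∈ℤ} D_k equals the Borel σ-algebra of X. -/
open MeasureTheory Set
open scoped ENNReal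

universe u

/-- A quasi-metric on `X` with quasi-triangle constant `A₀`. -/
structure IsQuasiMetric {X : Type u} (ρ : X → X → ℝ) (A₀ : ℝ) : Prop where
  one_le : 1 ≤ A₀
  nonneg : ∀ x y, 0 ≤ ρ x y
  symm : ∀ x y, ρ x y = ρ y x
  eq_zero_iff : ∀ x y, ρ x y = 0 ↔ x = y
  triangle : ∀ x y z, ρ x y ≤ A₀ * (ρ x z + ρ z y)

/-- The quasi-metric ball `B(x,r)`. -/
def qball {X : Type u} (ρ : X → X → ℝ) (x : X) (r : ℝ) : Set X := {y | ρ x y < r}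

/-- A system of dyadic cubes on `(X,ρ)` with parameters `δ ∈ (0,1)`, `0 < c₁ ≤ C₁ < ∞`. -/
structure DyadicSystem (X : Type u) [MeasurableSpace X] (ρ : X → X → ℝ)
    (δ c₁ C₁ : ℝ) where
  idx : ℤ → Set (Set X)
  center : ℤ → Set X → X
  countable : ∀ k, (idx k).Countable
  measurableSet : ∀ k, ∀ Q ∈ idx k, MeasurableSet Q
  cover : ∀ k, ⋃₀ idx k = Set.univ
  pairwiseDisjoint : ∀ k, ∀ Q ∈ idx k, ∀ Q' ∈ idx k, Q ≠ Q' → Disjoint Q Q'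
  nested : ∀ k ℓ : ℤ, k ≤ ℓ → ∀ Q ∈ idx k, ∀ R ∈ idx ℓ, R ⊆ Q ∨ Disjoint R Q
  nchild : ℕ
  children_card : ∀ k, ∀ Q ∈ idx k,
    1 ≤ {R | R ∈ idx (k + 1) ∧ R ⊆ Q}.ncard ∧ {R | R ∈ idx (k + 1) ∧ R ⊆ Q}.ncard ≤ nchild
  children_union : ∀ k, ∀ Q ∈ idx k, Q = ⋃₀ {R | R ∈ idx (k + 1) ∧ R ⊆ Q}
  center_mem : ∀ k, ∀ Q ∈ idx k, center k Q ∈ Q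
  ball_subset : ∀ k, ∀ Q ∈ idx k, qball ρ (center k Q) (c₁ * δ ^ k) ⊆ Q
  subset_ball : ∀ k, ∀ Q ∈ idx k, Q ⊆ qball ρ (center k Q) (C₁ * δ ^ k)

/-- `D` has the distinguished center point property with distinguished point `x₀`. -/
def DyadicSystem.DistinguishedPoint {X : Type u} [MeasurableSpace X] {ρ : X → X → ℝ}
    {δ c₁ C₁ : ℝ} (D : DyadicSystem X ρ δ c₁ C₁) (x₀ : X) : Prop :=
  ∀ k : ℤ, ∃ Q ∈ D.idx k, D.center k Q = x₀

/-- The doubling condition for a Borel measure on a quasi-metric space. -/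
def IsDoublingMeasure {X : Type u} [MeasurableSpace X] (ρ : X → X → ℝ)
    (μ : Measure X) (Cμ : ℝ≥0∞) : Prop :=
  ∀ (x : X) (r : ℝ), 0 < r →
    0 < μ (qball ρ x (2 * r)) ∧
    μ (qball ρ x (2 * r)) ≤ Cμ * μ (qball ρ x r) ∧
    μ (qball ρ x r) < ⊤

/-- A collection of adjacent systems of dyadic cubes with comparability constant `C`. -/
def AdjacentSystems {X : Type u} [MeasurableSpace X] (ρ : X → X → ℝ)
    {δ c₁ C₁ : ℝ} {T : ℕ} (D : Fin T → DyadicSystem X ρ δ c₁ C₁) (C : ℝ) : Prop :=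
  ∀ (x : X) (r : ℝ) (k : ℤ), δ ^ (k + 3) < r → r ≤ δ ^ (k + 2) →
    ∃ t : Fin T, ∃ Q ∈ (D t).idx k, qball ρ x r ⊆ Q ∧ Q ⊆ qball ρ x (C * r)

/-- The topology induced by a quasi-metric: a set is open iff each of its points has a
quasi-metric ball around it contained in the set. -/
def quasiMetricTopology {X : Type u} (ρ : X → X → ℝ) : TopologicalSpace X where
  IsOpen Ω := ∀ x ∈ Ω, ∃ ε > 0, qball ρ x ε ⊆ Ω
  isOpen_univ := fun _ _ => ⟨1, one_pos, Set.subset_univ _⟩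
  isOpen_inter := by
    intro s t hs ht x hx
    obtain ⟨ε₁, hε₁, h₁⟩ := hs x hx.1
    obtain ⟨ε₂, hε₂, h₂⟩ := ht x hx.2
    refine ⟨min ε₁ ε₂, lt_min hε₁ hε₂, fun y hy => ?_⟩
    have hy' : ρ x y < min ε₁ ε₂ := hy
    exact ⟨h₁ (show ρ x y < ε₁ from lt_of_lt_of_le hy' (min_le_left _ _)),
      h₂ (show ρ x y < ε₂ from lt_of_lt_of_le hy' (min_le_right _ _))⟩
  isOpen_sUnion := by
    intro S hS x hx
    obtain ⟨s, hsS, hxs⟩ := hx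
    obtain ⟨ε, hε, h⟩ := hS s hsS x hxs
    exact ⟨ε, hε, h.trans (Set.subset_sUnion_of_mem hsS)⟩

/-- For a system of dyadic cubes on a quasi-metric space `X`, carrying
the Borel σ-algebra of the topology induced by `ρ` (so that the cubes are Borel sets),
the σ-algebra generated by the collection of all dyadic cubes equals the Borel
σ-algebra of `X`. -/
theorem statement3 {X : Type u} [m : MeasurableSpace X] (ρ : X → X → ℝ) (A₀ : ℝ)
    (hρ : IsQuasiMetric ρ A₀)
    (hm : m = MeasurableSpace.generateFrom {s : Set X | (quasiMetricTopology ρ).IsOpen s})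
    (δ c₁ C₁ : ℝ) (hδ0 : 0 < δ) (hδ1 : δ < 1) (hc₁ : 0 < c₁) (hc₁C₁ : c₁ ≤ C₁)
    (D : DyadicSystem X ρ δ c₁ C₁) :
    MeasurableSpace.generateFrom {Q : Set X | ∃ k : ℤ, Q ∈ D.idx k} = m := by
  have hA₀ : 0 < A₀ := lt_of_lt_of_le one_pos hρ.one_le
  have hC₁ : 0 < C₁ := lt_of_lt_of_le hc₁ hc₁C₁
  apply le_antisymm
  · apply MeasurableSpace.generateFrom_le
    rintro Q ⟨k, hQ⟩
    exact D.measurableSet k Q hQ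
  · refine le_trans (le_of_eq hm) (MeasurableSpace.generateFrom_le ?_)
    intro Ω hΩ
    -- Ω is open; show it is a countable union of cubes
    set S : Set (Set X) := {Q : Set X | ∃ k : ℤ, Q ∈ D.idx k} with hS
    have hScount : S.Countable := by
      have : S = ⋃ k : ℤ, D.idx k := by
        ext Q; simp [hS]
      rw [this]
      exact Set.countable_iUnion D.countable
    set T : Set (Set X) := {Q : Set X | Q ∈ S ∧ Q ⊆ Ω} with hT
    have hTcount : T.Countable := hScount.mono (fun Q hQ => hQ.1)
    have hΩeq : Ω = ⋃₀ T := by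
      apply Set.Subset.antisymm
      · intro x hx
        obtain ⟨ε, hε, hball⟩ := hΩ x hx
        -- pick n with δ^n < ε / (2 * A₀ * C₁)
        obtain ⟨n, hn⟩ := exists_pow_lt_of_lt_one
          (div_pos hε (by positivity : (0:ℝ) < 2 * A₀ * C₁)) hδ1
        have hcov := D.cover (n : ℤ)
        have hx' : x ∈ ⋃₀ D.idx (n : ℤ) := by rw [hcov]; trivial
        obtain ⟨Q, hQ, hxQ⟩ := hx'
        have hsub := D.subset_ball (n : ℤ) Q hQ
        have hδn : δ ^ ((n : ℤ)) = δ ^ n := zpow_natCast δ n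
        have hQΩ : Q ⊆ Ω := by
          intro y hy
          apply hball
          have h1 : ρ (D.center (n : ℤ) Q) x < C₁ * δ ^ (n : ℤ) := hsub hxQ
          have h2 : ρ (D.center (n : ℤ) Q) y < C₁ * δ ^ (n : ℤ) := hsub hy
          have h3 : ρ x y ≤ A₀ * (ρ x (D.center (n : ℤ) Q) + ρ (D.center (n : ℤ) Q) y) :=
            hρ.triangle x y _
          have h4 : ρ x (D.center (n : ℤ) Q) = ρ (D.center (n : ℤ) Q) x := hρ.symm _ _
          have h5 : ρ x y < A₀ * (C₁ * δ ^ (n : ℤ) + C₁ * δ ^ (n : ℤ)) := by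
            refine lt_of_le_of_lt h3 ?_
            apply mul_lt_mul_of_pos_left _ hA₀
            rw [h4]
            exact add_lt_add h1 h2
          have h6 : A₀ * (C₁ * δ ^ (n : ℤ) + C₁ * δ ^ (n : ℤ)) = 2 * A₀ * C₁ * δ ^ n := by
            rw [hδn]; ring
          have h7 : 2 * A₀ * C₁ * δ ^ n < ε := by
            rw [← lt_div_iff₀' (by positivity : (0:ℝ) < 2 * A₀ * C₁)] at *
            exact hn
          show ρ x y < ε
          calc ρ x y < A₀ * (C₁ * δ ^ (n : ℤ) + C₁ * δ ^ (n : ℤ)) := h5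
            _ = 2 * A₀ * C₁ * δ ^ n := h6
            _ < ε := h7
        exact ⟨Q, ⟨⟨(n : ℤ), hQ⟩, hQΩ⟩, hxQ⟩
      · intro x hx
        obtain ⟨Q, hQ, hxQ⟩ := hx
        exact hQ.2 hxQ
    rw [hΩeq]
    exact MeasurableSet.sUnion hTcount
      (fun Q hQ => MeasurableSpace.measurableSet_generateFrom hQ.1)
end

section
/- Let (X,ρ) be a quasi-metric space with quasi-triangle constant A₀ and let {D^t : t = 1,…,T} be a collection of adjacent systems of dyadic cubes with parameters δ ≤ (96A₀⁶)^{-1}, c₁ = (12A₀⁴)^{-1}, C₁ = 4A₀², C = 8A₀³δ^{-3}, such that in addition each system D^t has center points satisfying min_α ρ(x, x^k_α) < 2A₀δ^k for all x ∈ X and k ∈ ℤ. If a weight ω is dyadic doubling with constant C_dydbl with respect to each system D^t, t = 1,…,T, then ω is a doubling weight: for all x ∈ X and r > 0, 0 < ω(B(x,2r)) ≤ (C_dydbl)^N ω(B(x,r)) < ∞, where N := ⌈log(16A₀³/δ⁴)/log(1/δ)⌉. -/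
open MeasureTheory Set
open scoped ENNReal

universe u

/-!
Pick `k` with `δ^(k+3) < 2r ≤ δ^(k+2)`; adjacency gives a cube `Q` of generation `k` in some
system `D t` with `B(x,2r) ⊆ Q`. Descending `N` generations along the cubes containing `x`
loses a factor `C_dydbl` per step and ends in a cube `R ∋ x` of generation `k+N`. Its quasi-metric
diameter is below `8A₀³δ^(k+N) ≤ δ^(k+4)/2 < r` by the choice of `N`, so `R ⊆ B(x,r)` and
`ω(B(x,2r)) ≤ ω(Q) ≤ C_dydbl^N ω(R) ≤ C_dydbl^N ω(B(x,r))`.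
-/

namespace IsQuasiMetric

variable {X : Type u} {ρ : X → X → ℝ} {A₀ : ℝ}

theorem mem_qball_self (hρ : IsQuasiMetric ρ A₀) (x : X) {r : ℝ} (hr : 0 < r) :
    x ∈ qball ρ x r := by
  simpa [qball, (hρ.eq_zero_iff x x).mpr rfl] using hr

end IsQuasiMetric

theorem qball_mono {X : Type u} (ρ : X → X → ℝ) (x : X) {r s : ℝ} (hrs : r ≤ s) :
    qball ρ x r ⊆ qball ρ x s :=
  fun _ hy => lt_of_lt_of_le hy hrs

theorem exists_zpow_lt_le {δ s : ℝ} (hδ0 : 0 < δ) (hδ1 : δ < 1) (hs : 0 < s) :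
    ∃ k : ℤ, δ ^ (k + 1) < s ∧ s ≤ δ ^ k := by
  obtain ⟨n, hn, hn'⟩ := exists_mem_Ioc_zpow hs ((one_lt_inv₀ hδ0).mpr hδ1)
  refine ⟨-(n + 1), ?_, ?_⟩
  · rwa [show -(n + 1) + 1 = -n by ring, zpow_neg, ← inv_zpow]
  · rwa [zpow_neg, ← inv_zpow]

theorem pow_ceil_log_div_log_le {δ a : ℝ} (hδ0 : 0 < δ) (hδ1 : δ < 1) (ha : 0 < a) :
    δ ^ ⌈Real.log a / Real.log (1 / δ)⌉₊ ≤ a⁻¹ := by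
  have hlog : 0 < Real.log (1 / δ) := Real.log_pos ((one_lt_div hδ0).mpr hδ1)
  have hceil : Real.log a ≤ ⌈Real.log a / Real.log (1 / δ)⌉₊ * Real.log (1 / δ) :=
    (div_le_iff₀ hlog).mp (Nat.le_ceil _)
  rw [Real.pow_le_iff_le_log hδ0 (inv_pos.mpr ha), Real.log_inv]
  rw [one_div, Real.log_inv] at hceil hlog ⊢
  linarith

theorem mul_zpow_add_ceil_log_le {A₀ δ : ℝ} (hA₀ : 0 < A₀) (hδ0 : 0 < δ) (hδ1 : δ < 1) (k : ℤ) :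
    2 * A₀ * (4 * A₀ ^ 2) * δ ^ (k + ⌈Real.log (16 * A₀ ^ 3 / δ ^ 4) / Real.log (1 / δ)⌉₊) ≤
      δ ^ (k + 3) / 2 := by
  set N := ⌈Real.log (16 * A₀ ^ 3 / δ ^ 4) / Real.log (1 / δ)⌉₊
  have hN : δ ^ N ≤ (16 * A₀ ^ 3 / δ ^ 4)⁻¹ := pow_ceil_log_div_log_le hδ0 hδ1 (by positivity)
  calc 2 * A₀ * (4 * A₀ ^ 2) * δ ^ (k + N) = 8 * A₀ ^ 3 * δ ^ k * δ ^ N := by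
        rw [zpow_add₀ hδ0.ne', zpow_natCast]; ring
    _ ≤ 8 * A₀ ^ 3 * δ ^ k * (16 * A₀ ^ 3 / δ ^ 4)⁻¹ := by gcongr
    _ = δ ^ k * δ ^ 4 / 2 := by field_simp; ring
    _ ≤ δ ^ k * δ ^ 3 / 2 := by
        gcongr δ ^ k * ?_ / 2
        exact pow_le_pow_of_le_one hδ0.le hδ1.le (by norm_num)
    _ = δ ^ (k + 3) / 2 := by rw [zpow_add₀ hδ0.ne']; norm_cast

namespace DyadicSystem

variable {X : Type u} [MeasurableSpace X] {ρ : X → X → ℝ} {δ c₁ C₁ : ℝ}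
  (D : DyadicSystem X ρ δ c₁ C₁)

theorem exists_mem (x : X) (k : ℤ) : ∃ Q ∈ D.idx k, x ∈ Q := by
  rw [← Set.mem_sUnion, D.cover k]
  exact Set.mem_univ x

theorem exists_child {k : ℤ} {Q : Set X} (hQ : Q ∈ D.idx k) :
    ∃ S ∈ D.idx (k + 1), S ⊆ Q := by
  have hc := D.center_mem k Q hQ
  rw [D.children_union k Q hQ] at hc
  obtain ⟨S, ⟨hS, hSQ⟩, -⟩ := hc
  exact ⟨S, hS, hSQ⟩

theorem subset_of_mem_of_mem {k ℓ : ℤ} (hkℓ : k ≤ ℓ) {Q R : Set X} (hQ : Q ∈ D.idx k)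
    (hR : R ∈ D.idx ℓ) {x : X} (hxQ : x ∈ Q) (hxR : x ∈ R) : R ⊆ Q :=
  (D.nested k ℓ hkℓ Q hQ R hR).resolve_right
    fun h => Set.disjoint_left.mp h hxR hxQ

theorem subset_qball_of_mem {A₀ : ℝ} (hρ : IsQuasiMetric ρ A₀) {k : ℤ} {R : Set X}
    (hR : R ∈ D.idx k) {x : X} (hxR : x ∈ R) :
    R ⊆ qball ρ x (2 * A₀ * C₁ * δ ^ k) := by
  intro y hy
  set c := D.center k R
  have hcx : ρ x c < C₁ * δ ^ k := hρ.symm x c ▸ D.subset_ball k R hR hxR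
  have hcy : ρ c y < C₁ * δ ^ k := D.subset_ball k R hR hy
  have hA₀ : 0 < A₀ := zero_lt_one.trans_le hρ.one_le
  calc ρ x y ≤ A₀ * (ρ x c + ρ c y) := hρ.triangle x y c
    _ < A₀ * (C₁ * δ ^ k + C₁ * δ ^ k) := by gcongr
    _ = 2 * A₀ * C₁ * δ ^ k := by ring

variable (μ : Measure X) (ω : X → ℝ≥0∞) (C : ℝ≥0∞)

def IsDyadicDoubling : Prop :=
  ∀ k : ℤ, ∀ Q ∈ D.idx k, ∀ Q' ∈ D.idx (k + 1), Q' ⊆ Q →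
    0 < ∫⁻ y in Q, ω y ∂μ ∧
    ∫⁻ y in Q, ω y ∂μ ≤ C * ∫⁻ y in Q', ω y ∂μ ∧
    C * ∫⁻ y in Q', ω y ∂μ < ⊤

namespace IsDyadicDoubling

variable {D μ ω C} {k : ℤ} {Q : Set X}

theorem lintegral_pos (h : D.IsDyadicDoubling μ ω C) (hQ : Q ∈ D.idx k) :
    0 < ∫⁻ y in Q, ω y ∂μ :=
  let ⟨S, hS, hSQ⟩ := D.exists_child hQ
  (h k Q hQ S hS hSQ).1

theorem lintegral_lt_top (h : D.IsDyadicDoubling μ ω C) (hQ : Q ∈ D.idx k) :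
    ∫⁻ y in Q, ω y ∂μ < ⊤ :=
  let ⟨S, hS, hSQ⟩ := D.exists_child hQ
  (h k Q hQ S hS hSQ).2.1.trans_lt (h k Q hQ S hS hSQ).2.2

theorem ne_top (h : D.IsDyadicDoubling μ ω C) (hQ : Q ∈ D.idx k) : C ≠ ⊤ := by
  obtain ⟨S, hS, hSQ⟩ := D.exists_child hQ
  intro hC
  have hfin := (h k Q hQ S hS hSQ).2.2
  rw [hC, ENNReal.top_mul (h.lintegral_pos hS).ne'] at hfin
  exact lt_irrefl ⊤ hfin

theorem exists_le_pow_mul (h : D.IsDyadicDoubling μ ω C) (hQ : Q ∈ D.idx k) {x : X}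
    (hxQ : x ∈ Q) (n : ℕ) :
    ∃ R ∈ D.idx (k + n), x ∈ R ∧ ∫⁻ y in Q, ω y ∂μ ≤ C ^ n * ∫⁻ y in R, ω y ∂μ := by
  induction n with
  | zero => exact ⟨Q, by simpa using hQ, hxQ, by simp⟩
  | succ n ih =>
    obtain ⟨R, hR, hxR, hle⟩ := ih
    obtain ⟨S, hS, hxS⟩ := D.exists_mem x (k + n + 1)
    have hSR : S ⊆ R := D.subset_of_mem_of_mem (by omega) hR hS hxR hxS
    refine ⟨S, by rwa [Nat.cast_succ, ← add_assoc], hxS, ?_⟩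
    calc ∫⁻ y in Q, ω y ∂μ ≤ C ^ n * ∫⁻ y in R, ω y ∂μ := hle
      _ ≤ C ^ n * (C * ∫⁻ y in S, ω y ∂μ) := by gcongr; exact (h _ R hR S hS hSR).2.1
      _ = C ^ (n + 1) * ∫⁻ y in S, ω y ∂μ := by ring

end IsDyadicDoubling

end DyadicSystem

theorem statement8_general {X : Type u} [MeasurableSpace X] (ρ : X → X → ℝ) (A₀ : ℝ)
    (hρ : IsQuasiMetric ρ A₀) (δ : ℝ) (hδ0 : 0 < δ) (hδ : δ ≤ (96 * A₀ ^ 6)⁻¹)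
    (T : ℕ) (D : Fin T → DyadicSystem X ρ δ (12 * A₀ ^ 4)⁻¹ (4 * A₀ ^ 2))
    (hadj : AdjacentSystems ρ D (8 * A₀ ^ 3 / δ ^ 3))
    (μ : Measure X) (ω : X → ℝ≥0∞) (Cdydbl : ℝ≥0∞)
    (hdydbl : ∀ (t : Fin T) (k : ℤ), ∀ Q ∈ (D t).idx k, ∀ Q' ∈ (D t).idx (k + 1),
      Q' ⊆ Q →
        0 < ∫⁻ y in Q, ω y ∂μ ∧
        ∫⁻ y in Q, ω y ∂μ ≤ Cdydbl * ∫⁻ y in Q', ω y ∂μ ∧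
        Cdydbl * ∫⁻ y in Q', ω y ∂μ < ⊤) :
    ∀ (x : X) (r : ℝ), 0 < r →
      0 < ∫⁻ y in qball ρ x (2 * r), ω y ∂μ ∧
      ∫⁻ y in qball ρ x (2 * r), ω y ∂μ ≤
        Cdydbl ^ (⌈Real.log (16 * A₀ ^ 3 / δ ^ 4) / Real.log (1 / δ)⌉₊) *
          ∫⁻ y in qball ρ x r, ω y ∂μ ∧
      Cdydbl ^ (⌈Real.log (16 * A₀ ^ 3 / δ ^ 4) / Real.log (1 / δ)⌉₊) *
          ∫⁻ y in qball ρ x r, ω y ∂μ < ⊤ := by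
  intro x r hr
  have hA₀ : 0 < A₀ := zero_lt_one.trans_le hρ.one_le
  have hδ1 : δ < 1 :=
    hδ.trans_lt (inv_lt_one_of_one_lt₀ (by nlinarith [one_le_pow₀ (n := 6) hρ.one_le]))
  obtain ⟨k, hlow, hup⟩ : ∃ k : ℤ, δ ^ (k + 3) < 2 * r ∧ 2 * r ≤ δ ^ (k + 2) := by
    obtain ⟨m, hm1, hm⟩ := exists_zpow_lt_le hδ0 hδ1 (by positivity : 0 < 2 * r)
    exact ⟨m - 2, by rwa [show m - 2 + 3 = m + 1 by ring], by rwa [sub_add_cancel]⟩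
  obtain ⟨t, Q, hQ, hBQ, -⟩ := hadj x (2 * r) k hlow hup
  have hωt : (D t).IsDyadicDoubling μ ω Cdydbl := hdydbl t
  set N := ⌈Real.log (16 * A₀ ^ 3 / δ ^ 4) / Real.log (1 / δ)⌉₊
  obtain ⟨R, hR, hxR, hQR⟩ :=
    hωt.exists_le_pow_mul hQ (hBQ (hρ.mem_qball_self x (by positivity))) N
  have hRr : R ⊆ qball ρ x r :=
    ((D t).subset_qball_of_mem hρ hR hxR).trans (qball_mono ρ x <| by
      linarith [mul_zpow_add_ceil_log_le hA₀ hδ0 hδ1 k])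
  have hr2r := qball_mono ρ x (by linarith : r ≤ 2 * r)
  refine ⟨(hωt.lintegral_pos hR).trans_le (lintegral_mono_set (hRr.trans hr2r)), ?_, ?_⟩
  · calc ∫⁻ y in qball ρ x (2 * r), ω y ∂μ ≤ ∫⁻ y in Q, ω y ∂μ := lintegral_mono_set hBQ
      _ ≤ Cdydbl ^ N * ∫⁻ y in R, ω y ∂μ := hQR
      _ ≤ Cdydbl ^ N * ∫⁻ y in qball ρ x r, ω y ∂μ := by gcongr
  · exact ENNReal.mul_lt_top (ENNReal.pow_lt_top (hωt.ne_top hQ).lt_top)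
      ((lintegral_mono_set (hr2r.trans hBQ)).trans_lt (hωt.lintegral_lt_top hQ))

/-- A weight that is dyadic doubling with constant `C_dydbl` with
respect to each of the adjacent systems of dyadic cubes (with the parameters of the
Hytönen–Kairema construction and the density of center points) is a doubling weight,
with doubling constant `C_dydbl^N` where `N = ⌈log(16A₀³/δ⁴)/log(1/δ)⌉`. -/
theorem statement8 {X : Type u} [MeasurableSpace X] (ρ : X → X → ℝ) (A₀ : ℝ)
    (hρ : IsQuasiMetric ρ A₀) (δ : ℝ) (hδ0 : 0 < δ) (hδ : δ ≤ (96 * A₀ ^ 6)⁻¹)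
    (T : ℕ) (D : Fin T → DyadicSystem X ρ δ (12 * A₀ ^ 4)⁻¹ (4 * A₀ ^ 2))
    (hadj : AdjacentSystems ρ D (8 * A₀ ^ 3 / δ ^ 3))
    (hcenter : ∀ (t : Fin T) (x : X) (k : ℤ),
      ∃ Q ∈ (D t).idx k, ρ x ((D t).center k Q) < 2 * A₀ * δ ^ k)
    (μ : Measure X) (ω : X → ℝ≥0∞) (hω : Measurable ω) (Cdydbl : ℝ≥0∞)
    (hdydbl : ∀ (t : Fin T) (k : ℤ), ∀ Q ∈ (D t).idx k, ∀ Q' ∈ (D t).idx (k + 1),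
      Q' ⊆ Q →
        0 < ∫⁻ y in Q, ω y ∂μ ∧
        ∫⁻ y in Q, ω y ∂μ ≤ Cdydbl * ∫⁻ y in Q', ω y ∂μ ∧
        Cdydbl * ∫⁻ y in Q', ω y ∂μ < ⊤) :
    ∀ (x : X) (r : ℝ), 0 < r →
      0 < ∫⁻ y in qball ρ x (2 * r), ω y ∂μ ∧
      ∫⁻ y in qball ρ x (2 * r), ω y ∂μ ≤
        Cdydbl ^ (⌈Real.log (16 * A₀ ^ 3 / δ ^ 4) / Real.log (1 / δ)⌉₊) *
          ∫⁻ y in qball ρ x r, ω y ∂μ ∧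
      Cdydbl ^ (⌈Real.log (16 * A₀ ^ 3 / δ ^ 4) / Real.log (1 / δ)⌉₊) *
          ∫⁻ y in qball ρ x r, ω y ∂μ < ⊤ :=
  statement8_general ρ A₀ hρ δ hδ0 hδ T D hadj μ ω Cdydbl hdydbl
end

section
/- Let (X,ρ) be a quasi-metric space, let D be a system of dyadic cubes with parameters δ ∈ (0,1), 0 < c₁ ≤ C₁ < ∞ possessing the distinguished center point property, and let μ be a positive Borel measure on X with μ(B) < ∞ for every ball B ⊆ X and μ(X) = ∞. Fix 1 < p < ∞ and f ∈ L^p(X,μ). Then for every x ∈ X, the averages of f over the cubes containing x tend to zero along decreasing generations: μ(Q^m(x))^{-1} ∫_{Q^m(x)} f dμ → 0 as m → −∞ (for all m such that μ(Q^m(x)) > 0, which holds for all sufficiently negative m, and indeed μ(Q^m(x)) → ∞ as m → −∞). -/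
open MeasureTheory Set
open scoped ENNReal

universe u

/-! The cube of generation `m` centred at the distinguished point `x₀` contains the ball
`B(x₀, c₁δ^m)`. For very negative `m` this ball contains `x`, so that cube is `Q^m(x)`, and
since the balls exhaust `X`, `μ(Q^m(x)) → μ(X) = ∞`. By Hölder's inequality the average of
`f` over a set of finite measure `t` is at most `‖f‖_p t^{-1/p}`, which tends to `0`. -/

open Filter Topology

theorem tendsto_zpow_atBot_atTop_of_lt_one {δ : ℝ} (hδ0 : 0 < δ) (hδ1 : δ < 1) :
    Tendsto (fun m : ℤ => δ ^ m) atBot atTop := by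
  have hδi : 1 < δ⁻¹ := (one_lt_inv₀ hδ0).mpr hδ1
  have h : Tendsto (fun m : ℤ => δ⁻¹ ^ m) atTop atTop := by
    refine (zpow_right_mono₀ hδi.le).tendsto_atTop_atTop fun b => ?_
    obtain ⟨n, hn⟩ := pow_unbounded_of_one_lt b hδi
    exact ⟨n, by simpa using hn.le⟩
  refine (h.comp tendsto_neg_atBot_atTop).congr fun m => ?_
  simp [inv_zpow']

theorem tendsto_measure_qball_atTop {X : Type u} [MeasurableSpace X] (ρ : X → X → ℝ)
    (μ : Measure X) (x₀ : X) :
    Tendsto (fun r => μ (qball ρ x₀ r)) atTop (𝓝 (μ univ)) := by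
  have hmono : Monotone (qball ρ x₀) := fun r r' hr y hy => lt_of_lt_of_le hy hr
  have hcover : ⋃ r, qball ρ x₀ r = univ :=
    eq_univ_of_forall fun y => mem_iUnion.2 (exists_gt (ρ x₀ y))
  have h := tendsto_measure_iUnion_atTop (μ := μ) hmono
  rwa [hcover] at h

namespace DyadicSystem

variable {X : Type u} [MeasurableSpace X] {ρ : X → X → ℝ} {δ c₁ C₁ : ℝ}
  (D : DyadicSystem X ρ δ c₁ C₁)

theorem eq_of_mem_of_mem {k : ℤ} {Q Q' : Set X} (hQ : Q ∈ D.idx k) (hQ' : Q' ∈ D.idx k)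
    {x : X} (hx : x ∈ Q) (hx' : x ∈ Q') : Q = Q' := by
  by_contra hne
  exact disjoint_left.mp (D.pairwiseDisjoint k Q hQ Q' hQ' hne) hx hx'

theorem qball_subset_of_distinguishedPoint {x₀ : X} (hx₀ : D.DistinguishedPoint x₀) {m : ℤ}
    {Q : Set X} (hQ : Q ∈ D.idx m) {x : X} (hxQ : x ∈ Q) (hx : ρ x₀ x < c₁ * δ ^ m) :
    qball ρ x₀ (c₁ * δ ^ m) ⊆ Q := by
  obtain ⟨Q₀, hQ₀, rfl⟩ := hx₀ m
  rw [D.eq_of_mem_of_mem hQ hQ₀ hxQ (D.ball_subset m Q₀ hQ₀ hx)]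
  exact D.ball_subset m Q₀ hQ₀

theorem eventually_lt_measure {x₀ : X} (hx₀ : D.DistinguishedPoint x₀) (hδ0 : 0 < δ)
    (hδ1 : δ < 1) (hc₁ : 0 < c₁) {μ : Measure X} (hXinf : μ univ = ⊤) (x : X) {N : ℝ≥0∞}
    (hN : N < ⊤) : ∀ᶠ m in atBot, ∀ Q ∈ D.idx m, x ∈ Q → N < μ Q := by
  rw [← hXinf] at hN
  obtain ⟨r, hr⟩ := ((tendsto_measure_qball_atTop ρ μ x₀).eventually_const_lt hN).exists
  have hlarge : ∀ᶠ m : ℤ in atBot, max r (ρ x₀ x) < c₁ * δ ^ m :=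
    ((tendsto_zpow_atBot_atTop_of_lt_one hδ0 hδ1).const_mul_atTop hc₁).eventually_gt_atTop _
  filter_upwards [hlarge] with m hm Q hQ hxQ
  rw [max_lt_iff] at hm
  have hball := D.qball_subset_of_distinguishedPoint hx₀ hQ hxQ hm.2
  calc N < μ (qball ρ x₀ r) := hr
    _ ≤ μ Q := measure_mono fun y hy => hball (hy.trans hm.1)

end DyadicSystem

section Holder

variable {α E : Type*} [MeasurableSpace α] [NormedAddCommGroup E] [NormedSpace ℝ E]
  {μ : Measure α} {p : ℝ≥0∞} {f : α → E} {s : Set α}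

theorem norm_setIntegral_le_eLpNorm_mul_rpow (hp : 1 ≤ p) (hf : MemLp f p μ) (hs : μ s ≠ ⊤) :
    ‖∫ x in s, f x ∂μ‖ ≤ (eLpNorm f p μ).toReal * μ.real s ^ (1 - 1 / p.toReal) := by
  have hexp : 0 ≤ 1 - 1 / p.toReal := by
    rcases eq_or_ne p ⊤ with rfl | hp_top
    · simp
    · have : 1 ≤ p.toReal := by simpa using ENNReal.toReal_mono hp_top hp
      linarith [div_le_one_of_le₀ this (zero_le_one.trans this)]
  have holder : eLpNorm f 1 (μ.restrict s) ≤ eLpNorm f p μ * μ s ^ (1 - 1 / p.toReal) := by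
    have h := eLpNorm_le_eLpNorm_mul_rpow_measure_univ (μ := μ.restrict s) hp
      hf.aestronglyMeasurable.restrict
    rw [Measure.restrict_apply_univ, ENNReal.toReal_one, div_one] at h
    exact h.trans (mul_le_mul_left (eLpNorm_mono_measure f Measure.restrict_le_self) _)
  calc ‖∫ x in s, f x ∂μ‖ ≤ ∫ x in s, ‖f x‖ ∂μ := norm_integral_le_integral_norm _
    _ = (eLpNorm f 1 (μ.restrict s)).toReal := by
      rw [integral_norm_eq_lintegral_enorm hf.aestronglyMeasurable.restrict,
        eLpNorm_one_eq_lintegral_enorm]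
    _ ≤ (eLpNorm f p μ * μ s ^ (1 - 1 / p.toReal)).toReal :=
      ENNReal.toReal_mono (ENNReal.mul_ne_top hf.eLpNorm_ne_top
        (ENNReal.rpow_ne_top_of_nonneg hexp hs)) holder
    _ = (eLpNorm f p μ).toReal * μ.real s ^ (1 - 1 / p.toReal) := by
      rw [ENNReal.toReal_mul, ← ENNReal.toReal_rpow, measureReal_def]

theorem norm_setAverage_le_eLpNorm_mul_rpow (hp : 1 ≤ p) (hf : MemLp f p μ) (hs : μ s ≠ ⊤) :
    ‖⨍ x in s, f x ∂μ‖ ≤ (eLpNorm f p μ).toReal * μ.real s ^ (-(1 / p.toReal)) := by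
  rw [setAverage_eq, norm_smul, norm_inv, Real.norm_of_nonneg measureReal_nonneg]
  rcases measureReal_nonneg.eq_or_lt with hzero | hpos
  · rw [← hzero, inv_zero, zero_mul]
    positivity
  calc (μ.real s)⁻¹ * ‖∫ x in s, f x ∂μ‖
      ≤ (μ.real s)⁻¹ * ((eLpNorm f p μ).toReal * μ.real s ^ (1 - 1 / p.toReal)) := by
        gcongr
        exact norm_setIntegral_le_eLpNorm_mul_rpow hp hf hs
    _ = (eLpNorm f p μ).toReal * μ.real s ^ (-(1 / p.toReal)) := by
      rw [Real.rpow_sub hpos, Real.rpow_one, Real.rpow_neg hpos.le]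
      field_simp

end Holder

theorem statement19_general {X : Type u} [MeasurableSpace X] (ρ : X → X → ℝ)
    (δ c₁ C₁ : ℝ) (hδ0 : 0 < δ) (hδ1 : δ < 1)
    (hc₁ : 0 < c₁) (hc₁C₁ : c₁ ≤ C₁)
    (D : DyadicSystem X ρ δ c₁ C₁) (x₀ : X) (hx₀ : D.DistinguishedPoint x₀)
    (μ : Measure X) (hballfin : ∀ (x : X) (r : ℝ), 0 < r → μ (qball ρ x r) < ⊤)
    (hXinf : μ Set.univ = ⊤)
    (p : ℝ) (hp : 1 < p) (f : X → ℝ) (hf : MemLp f (ENNReal.ofReal p) μ) :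
    ∀ x : X,
      (∀ N : ℝ, ∃ m₀ : ℤ, ∀ m ≤ m₀, ∀ Q ∈ D.idx m, x ∈ Q → ENNReal.ofReal N < μ Q) ∧
      (∀ ε : ℝ, 0 < ε → ∃ m₀ : ℤ, ∀ m ≤ m₀, ∀ Q ∈ D.idx m, x ∈ Q →
        |(μ Q).toReal⁻¹ * ∫ y in Q, f y ∂μ| < ε) := by
  intro x
  have hcubes (N : ℝ) := eventually_atBot.1
    (D.eventually_lt_measure hx₀ hδ0 hδ1 hc₁ hXinf x (ENNReal.ofReal_lt_top (r := N)))
  refine ⟨hcubes, fun ε hε => ?_⟩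
  have hp_toReal : (ENNReal.ofReal p).toReal = p := ENNReal.toReal_ofReal (by linarith)
  have hdecay := (tendsto_rpow_neg_atTop (one_div_pos.2 (zero_lt_one.trans hp))).const_mul
    (eLpNorm f (ENNReal.ofReal p) μ).toReal
  rw [mul_zero] at hdecay
  obtain ⟨N, hN⟩ := eventually_atTop.1 (hdecay.eventually (gt_mem_nhds hε))
  obtain ⟨m₀, hm₀⟩ := hcubes N
  refine ⟨m₀, fun m hm Q hQ hxQ => ?_⟩
  have hQfin : μ Q ≠ ⊤ := ((measure_mono (D.subset_ball m Q hQ)).trans_lt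
    (hballfin _ _ (mul_pos (hc₁.trans_le hc₁C₁) (zpow_pos hδ0 m)))).ne
  have hNQ : N ≤ μ.real Q := (ENNReal.ofReal_le_iff_le_toReal hQfin).1 (hm₀ m hm Q hQ hxQ).le
  calc |(μ Q).toReal⁻¹ * ∫ y in Q, f y ∂μ| = ‖⨍ y in Q, f y ∂μ‖ := by
        rw [setAverage_eq, smul_eq_mul, Real.norm_eq_abs, measureReal_def]
    _ ≤ _ := norm_setAverage_le_eLpNorm_mul_rpow (ENNReal.one_le_ofReal.2 hp.le) hf hQfin
    _ < ε := by rw [hp_toReal]; exact hN _ hNQ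

/-- Let `D` be a system of dyadic cubes with the distinguished center
point property on a quasi-metric space, and let `μ` be a positive Borel measure that is
finite on balls with `μ(X) = ∞`. For `1 < p < ∞` and `f ∈ L^p(X,μ)`, for every `x`
the measures `μ(Q^m(x))` tend to `∞` as `m → −∞` (so in particular are positive for
all sufficiently negative `m`), and the averages of `f` over `Q^m(x)` tend to `0` as
`m → −∞`. -/
theorem statement19 {X : Type u} [MeasurableSpace X] (ρ : X → X → ℝ) (A₀ : ℝ)
    (hρ : IsQuasiMetric ρ A₀) (δ c₁ C₁ : ℝ) (hδ0 : 0 < δ) (hδ1 : δ < 1)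
    (hc₁ : 0 < c₁) (hc₁C₁ : c₁ ≤ C₁)
    (D : DyadicSystem X ρ δ c₁ C₁) (x₀ : X) (hx₀ : D.DistinguishedPoint x₀)
    (μ : Measure X) (hballfin : ∀ (x : X) (r : ℝ), 0 < r → μ (qball ρ x r) < ⊤)
    (hXinf : μ Set.univ = ⊤)
    (p : ℝ) (hp : 1 < p) (f : X → ℝ) (hf : MemLp f (ENNReal.ofReal p) μ) :
    ∀ x : X,
      (∀ N : ℝ, ∃ m₀ : ℤ, ∀ m ≤ m₀, ∀ Q ∈ D.idx m, x ∈ Q → ENNReal.ofReal N < μ Q) ∧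
      (∀ ε : ℝ, 0 < ε → ∃ m₀ : ℤ, ∀ m ≤ m₀, ∀ Q ∈ D.idx m, x ∈ Q →
        |(μ Q).toReal⁻¹ * ∫ y in Q, f y ∂μ| < ε) :=
  statement19_general ρ δ c₁ C₁ hδ0 hδ1 hc₁ hc₁C₁ D x₀ hx₀ μ hballfin hXinf p hp f hf
end
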